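/- arXiv:0708.0114 — 5 statements merged into one kernel-verified Lean document; each statement's English description precedes it below -/
import Mathlib

section
/- Let F be an ordered field, {v_1,...,v_n} a basis of F^n with dual basis {v_1*,...,v_n*}, and define c(v_1,...,v_n)(w) = sign det(v_1,...,v_n) if v_i*(w) > 0 for all i, and 0 otherwise. Then for all w ∈ F^n with w, v_1, ..., v_n in general position, c(v_1,...,v_n)(w) = (-1)^n · d(v_1, ..., v_n, -w). -/
open Matrix
open scoped BigOperators

/-- A family of vectors in `F^n` is *in general position* if every subset with
at most `n` elements is linearly independent. -/
def GenPos {F : Type*} [Field F] {n m : ℕ} (v : Fin m → (Fin n → F)) : Prop :=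
  ∀ s : Finset (Fin m), s.card ≤ n → LinearIndependent F (fun i : s => v i.1)

/-- The sign of an element of an ordered field. -/
def sgn {F : Type*} [Field F] [LinearOrder F] [IsStrictOrderedRing F] (x : F) : ℤ :=
  if 0 < x then 1 else if x < 0 then -1 else 0

open Classical in
/-- The function `d` of the Shintani cocycle construction: for `v_0, ..., v_n` in
general position in `F^n`, it equals `(-1)^i sgn det(v_0,...,v̂_i,...,v_n)` (computed
here with `i = 0`) if the coefficients of the linear relation among the `v_j` all have
the same sign, and `0` otherwise. -/
noncomputable def dFun {F : Type*} [Field F] [LinearOrder F] [IsStrictOrderedRing F] {n : ℕ}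
    (v : Fin (n + 1) → (Fin n → F)) : ℤ :=
  if ∃ lam : Fin (n + 1) → F, (∀ i, lam i ≠ 0) ∧ (∑ i, lam i • v i) = 0 ∧
      ((∀ i, 0 < lam i) ∨ (∀ i, lam i < 0))
  then sgn (Matrix.of (fun r (j : Fin n) => v j.succ r)).det
  else 0

open Classical in
/-- The signed characteristic function of the open cone spanned by the basis
`v_1, ..., v_n`:  `c(v_1,...,v_n)(w) = sgn det(v_1,...,v_n)` if all coordinates of `w`
with respect to the basis (i.e. the values of the dual basis at `w`) are positive,
and `0` otherwise. -/
noncomputable def cFun {F : Type*} [Field F] [LinearOrder F] [IsStrictOrderedRing F] {n : ℕ}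
    (v : Fin n → (Fin n → F)) (w : Fin n → F) : ℤ :=
  let M : Matrix (Fin n) (Fin n) F := Matrix.of fun r j => v j r
  if ∀ i, 0 < (M⁻¹ *ᵥ w) i then sgn M.det else 0

/-! Write `w = ∑ aⱼ vⱼ` with `a = M⁻¹ w`. As the `vⱼ` are independent, every linear relation
among `v₁, …, vₙ, -w` is a multiple of `(a₁, …, aₙ, 1)`, so one with coefficients of a single
sign exists iff all `aⱼ > 0`, i.e. iff `c(v)(w) ≠ 0`. In that case multilinearity of the
determinant gives `det(v₂, …, vₙ, -w) = -a₁ det(v₂, …, vₙ, v₁) = (-1)ⁿ a₁ det(v₁, …, vₙ)`,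
whose sign is `(-1)ⁿ sgn det(v₁, …, vₙ)`. -/

theorem Fin.tail_snoc {α : Type*} {n : ℕ} (v : Fin (n + 1) → α) (x : α) :
    Fin.tail (Fin.snoc v x : Fin (n + 2) → α) = Fin.snoc (Fin.tail v) x := by
  ext j
  refine Fin.lastCases ?_ (fun k => ?_) j
  · simp [Fin.tail]
  · rw [Fin.tail, Fin.succ_castSucc, Fin.snoc_castSucc, Fin.snoc_castSucc, Fin.tail]

lemma sgn_eq_sign {F : Type*} [Field F] [LinearOrder F] [IsStrictOrderedRing F] (x : F) :
    sgn x = (SignType.sign x : ℤ) := by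
  rcases lt_trichotomy x 0 with hx | rfl | hx
  · simp [sgn, hx, not_lt_of_gt hx]
  · simp [sgn]
  · simp [sgn, hx]

section Relation

variable {F M : Type*} [Field F] [AddCommGroup M] [Module F M] {n : ℕ} {v : Fin n → M}
  {a : Fin n → F} {w : M}

lemma relation_snoc_neg_castSucc (hv : LinearIndependent F v) (hw : ∑ j, a j • v j = w)
    {lam : Fin (n + 1) → F} (hlam : ∑ i, lam i • (Fin.snoc v (-w) : Fin (n + 1) → M) i = 0)
    (i : Fin n) : lam i.castSucc = lam (Fin.last n) * a i := by
  simp only [Fin.sum_univ_castSucc, Fin.snoc_castSucc, Fin.snoc_last, smul_neg, ← hw,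
    Finset.smul_sum, smul_smul, ← sub_eq_add_neg, ← Finset.sum_sub_distrib,
    ← sub_smul] at hlam
  exact sub_eq_zero.mp (Fintype.linearIndependent_iff.mp hv _ hlam i)

variable [LinearOrder F] [IsStrictOrderedRing F]

lemma exists_sameSign_relation_snoc_neg_iff (hv : LinearIndependent F v)
    (hw : ∑ j, a j • v j = w) :
    (∃ lam : Fin (n + 1) → F, (∀ i, lam i ≠ 0) ∧
        ∑ i, lam i • (Fin.snoc v (-w) : Fin (n + 1) → M) i = 0 ∧
        ((∀ i, 0 < lam i) ∨ (∀ i, lam i < 0))) ↔ ∀ i, 0 < a i := by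
  constructor
  · rintro ⟨lam, hne, hlam, hsign⟩ i
    have ha : a i = lam i.castSucc / lam (Fin.last n) := by
      rw [relation_snoc_neg_castSucc hv hw hlam, mul_div_cancel_left₀ _ (hne _)]
    rcases hsign with hpos | hneg
    · exact ha ▸ div_pos (hpos _) (hpos _)
    · exact ha ▸ div_pos_of_neg_of_neg (hneg _) (hneg _)
  · intro ha
    have hpos : ∀ i, 0 < (Fin.snoc a 1 : Fin (n + 1) → F) i :=
      Fin.lastCases (by simp) (by simpa using ha)
    refine ⟨Fin.snoc a 1, fun i => (hpos i).ne', ?_, Or.inl hpos⟩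
    simp [Fin.sum_univ_castSucc, hw]

end Relation

lemma sum_inv_mulVec_smul_eq {F : Type*} [Field F] {n : ℕ} {v : Fin n → Fin n → F}
    (hv : LinearIndependent F v) (w : Fin n → F) :
    ∑ j, ((Matrix.of fun r j => v j r)⁻¹ *ᵥ w) j • v j = w := by
  set A : Matrix (Fin n) (Fin n) F := Matrix.of fun r j => v j r
  have hA : IsUnit A.det :=
    (Matrix.isUnit_iff_isUnit_det A).mp (Matrix.linearIndependent_cols_iff_isUnit.mp hv)
  have hcols : ∀ x, A *ᵥ x = ∑ j, x j • v j := by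
    intro x
    ext r
    simp [A, Matrix.mulVec, dotProduct, Finset.sum_apply, mul_comm]
  rw [← hcols, Matrix.mulVec_mulVec, Matrix.mul_nonsing_inv _ hA, Matrix.one_mulVec]

section Determinant

variable {R : Type*} [CommRing R] {m : ℕ}

lemma det_of_snoc_tail_sum (v : Fin (m + 1) → Fin (m + 1) → R) (a : Fin (m + 1) → R) :
    (Matrix.of (Fin.snoc (Fin.tail v) (∑ j, a j • v j) : Fin (m + 1) → Fin (m + 1) → R)).det =
      (-1) ^ m * a 0 * (Matrix.of v).det := by
  classical
  let L := (detRowAlternating : (Fin (m + 1) → R) [⋀^Fin (m + 1)]→ₗ[R] R).toLinearMap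
    (Fin.snoc (Fin.tail v) 0) (Fin.last m)
  have hL : ∀ x,
      (Matrix.of (Fin.snoc (Fin.tail v) x : Fin (m + 1) → Fin (m + 1) → R)).det = L x := by
    intro x
    change _ = detRowAlternating (Function.update _ _ x)
    rw [Fin.update_snoc_last]
    rfl
  have hsucc : ∀ k : Fin m, L (v k.succ) = 0 := by
    intro k
    rw [← hL]
    exact detRowAlternating.map_eq_zero_of_eq (Fin.snoc (Fin.tail v) (v k.succ))
      (i := k.castSucc) (j := Fin.last m) (by simp [Fin.tail]) (Fin.castSucc_lt_last k).ne
  have hzero : L (v 0) = (-1) ^ m * (Matrix.of v).det := by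
    rw [← hL, Fin.snoc_eq_cons_rotate, Fin.cons_self_tail]
    change ((Matrix.of v).submatrix (finRotate (m + 1)) id).det = _
    rw [det_permute, sign_finRotate]
    simp
  rw [hL, map_sum, Fin.sum_univ_succ]
  simp [hsucc, hzero]
  ring

lemma det_cols_succ_snoc_neg {v : Fin (m + 1) → Fin (m + 1) → R} {a : Fin (m + 1) → R}
    {w : Fin (m + 1) → R} (hw : ∑ j, a j • v j = w) :
    (Matrix.of fun r (j : Fin (m + 1)) => (Fin.snoc v (-w) : Fin (m + 2) → _) j.succ r).det =
      (-1) ^ m * -a 0 * (Matrix.of fun r j => v j r).det := by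
  have hnegw : -w = ∑ j, -a j • v j := by simp [← hw]
  rw [← Matrix.det_transpose, ← Matrix.det_transpose (Matrix.of _)]
  change (Matrix.of (Fin.tail (Fin.snoc v (-w) : Fin (m + 2) → Fin (m + 1) → R) :
    Fin (m + 1) → Fin (m + 1) → R)).det = _
  rw [Fin.tail_snoc, hnegw, det_of_snoc_tail_sum]
  rfl

end Determinant

theorem stmt7_general {F : Type*} [Field F] [LinearOrder F] [IsStrictOrderedRing F] {n : ℕ}
    (v : Fin n → (Fin n → F)) (hb : LinearIndependent F v)
    (w : Fin n → F) :
    cFun v w = (-1 : ℤ) ^ n * dFun (Fin.snoc v (-w)) := by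
  have hw := sum_inv_mulVec_smul_eq hb w
  simp only [cFun, dFun, exists_sameSign_relation_snoc_neg_iff hb hw]
  split_ifs with hpos
  · cases n with
    | zero => simp
    | succ m =>
      simp only [det_cols_succ_snoc_neg hw, sgn_eq_sign, sign_mul, sign_pow, Left.sign_neg,
        sign_one, sign_pos (hpos 0), SignType.coe_mul, SignType.coe_pow, SignType.coe_neg,
        SignType.coe_one]
      rw [← pow_succ, ← mul_assoc, ← mul_pow, neg_one_mul, neg_neg, one_pow, one_mul]
  · simp

/-- The signed cone function `c` in terms of `d`:
`c(v_1,...,v_n)(w) = (-1)^n · d(v_1, ..., v_n, -w)`, whenever `w, v_1, ..., v_n` are in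
general position and `v_1, ..., v_n` form a basis of `F^n`. -/
theorem stmt7 {F : Type*} [Field F] [LinearOrder F] [IsStrictOrderedRing F] {n : ℕ}
    (v : Fin n → (Fin n → F)) (hb : LinearIndependent F v)
    (w : Fin n → F) (hgp : GenPos (Fin.cons w v : Fin (n + 1) → Fin n → F)) :
    cFun v w = (-1 : ℤ) ^ n * dFun (Fin.snoc v (-w)) :=
  stmt7_general v hb w
end

section
/- For any real numbers t_1 < t_2 < ... < t_n, the Vandermonde vectors b(t_i) = (1, t_i, ..., t_i^{n-1}) form a basis of R^n; consequently, for α_1,...,α_n ∈ GL_n(R), the determinant det(α_1 b(ε_1), ..., α_n b(ε_n)) is a nonzero element of the iterated Laurent series field R((ε_1))...((ε_n)). -/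
open Matrix
open scoped BigOperators

noncomputable section

/-- The iterated Laurent series field `ℝ((ε_1))...((ε_n))`, together with its field
structure (built by recursion). -/
def IterData : ℕ → Σ' (T : Type), Field T
  | 0 => ⟨ℝ, inferInstance⟩
  | (n + 1) =>
    let p := IterData n
    letI : Field p.1 := p.2
    ⟨LaurentSeries p.1, inferInstance⟩

/-- The iterated Laurent series field `F = ℝ((ε_1))...((ε_n))`. -/
def IterLaurent (n : ℕ) : Type := (IterData n).1

instance (n : ℕ) : Field (IterLaurent n) := (IterData n).2

/-- `IterLaurent 0` is definitionally `ℝ`. -/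
def toR (x : IterLaurent 0) : ℝ := x

/-- `IterLaurent (n+1)` is definitionally the Laurent series field over `IterLaurent n`. -/
def toLS {n : ℕ} (x : IterLaurent (n + 1)) : LaurentSeries (IterLaurent n) := x

/-- An element of `ℝ((ε_1))...((ε_n))` is *positive* if it is nonzero and the leading
coefficient (the coefficient of the smallest exponent, exponents being ordered
lexicographically with `ε_{i+1}` infinitesimal with respect to `ε_i`) is positive. -/
def IterPos : ∀ n : ℕ, IterLaurent n → Prop
  | 0, x => 0 < toR x
  | (n + 1), x => toLS x ≠ 0 ∧ IterPos n ((toLS x).coeff (toLS x).order)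

/-- The order relation on `ℝ((ε_1))...((ε_n))`: `x < y` iff `y - x` is positive. -/
def llt (n : ℕ) (x y : IterLaurent n) : Prop := IterPos n (y - x)

/-- The embedding of `ℝ` into `ℝ((ε_1))...((ε_n))` as constant series. -/
def realEmb : ∀ n : ℕ, ℝ → IterLaurent n
  | 0, r => r
  | (n + 1), r => (HahnSeries.C (realEmb n r) : LaurentSeries (IterLaurent n))

/-- The variable `ε_{i+1}` as an element of `ℝ((ε_1))...((ε_n))` (for `i : Fin n`). -/
def epsV : ∀ n : ℕ, Fin n → IterLaurent n
  | (n + 1), i =>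
    if h : (i : ℕ) < n then
      (HahnSeries.C (epsV n ⟨i, h⟩) : LaurentSeries (IterLaurent n))
    else (HahnSeries.single (1 : ℤ) 1 : LaurentSeries (IterLaurent n))

/-!
The Vandermonde part is the classical nonvanishing of the Vandermonde determinant. For the
determinant over `ℝ((ε_1))...((ε_n))`, the substitution `X_i ↦ ε_i` embeds
`ℝ[X_1, ..., X_n]` into the iterated Laurent series field, so it suffices that the polynomial
determinant `det(α_1 b(X_1), ..., α_n b(X_n))` is nonzero, i.e. that it is nonzero at some
real point. Since the vectors `b(s)`, `s ∈ ℝ`, span `ℝ^n`, so does each set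
`{α_j b(s) | s ∈ ℝ}`, and points `t_1, ..., t_n` with `α_1 b(t_1), ..., α_n b(t_n)` linearly
independent can be picked one at a time.
-/

section LinearAlgebra

variable {K : Type*} [Field K]

theorem linearIndependent_pow_of_injective {n : ℕ} {t : Fin n → K} (ht : Function.Injective t) :
    LinearIndependent K (fun (i : Fin n) (j : Fin n) => t i ^ (j : ℕ)) :=
  Matrix.linearIndependent_rows_iff_isUnit.mpr <| (Matrix.isUnit_iff_isUnit_det _).mpr <|
    isUnit_iff_ne_zero.mpr (Matrix.det_vandermonde_ne_zero_iff.mpr ht)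

theorem span_pow_eq_top_of_injective {n : ℕ} {t : Fin n → K} (ht : Function.Injective t) :
    Submodule.span K (Set.range fun (i : Fin n) (j : Fin n) => t i ^ (j : ℕ)) = ⊤ :=
  (linearIndependent_pow_of_injective ht).span_eq_top_of_card_eq_finrank' (by simp)

theorem span_range_pow_eq_top [Infinite K] (n : ℕ) :
    Submodule.span K (Set.range fun (s : K) (j : Fin n) => s ^ (j : ℕ)) = ⊤ := by
  let t : Fin n ↪ K := Fin.valEmbedding.trans (Infinite.natEmbedding K)
  refine eq_top_iff.mpr <| (span_pow_eq_top_of_injective t.injective).ge.trans ?_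
  exact Submodule.span_mono (Set.range_comp_subset_range t fun s (j : Fin n) => s ^ (j : ℕ))

theorem span_range_mulVec_pow_eq_top [Infinite K] {n : ℕ} {α : Matrix (Fin n) (Fin n) K}
    (hα : IsUnit α.det) :
    Submodule.span K (Set.range fun s : K => α *ᵥ fun j : Fin n => s ^ (j : ℕ)) = ⊤ := by
  have hsurj : Function.Surjective α.mulVecLin :=
    Matrix.mulVec_surjective_iff_isUnit.mpr ((Matrix.isUnit_iff_isUnit_det _).mpr hα)
  change Submodule.span K (Set.range (α.mulVecLin ∘ fun s (j : Fin n) => s ^ (j : ℕ))) = ⊤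
  rw [Set.range_comp, Submodule.span_image, span_range_pow_eq_top,
    Submodule.map_top, LinearMap.range_eq_top.mpr hsurj]

end LinearAlgebra

theorem exists_linearIndependent_mem_of_span_eq_top {K V : Type*} [DivisionRing K]
    [AddCommGroup V] [Module K V] {m : ℕ} (hm : m ≤ Module.finrank K V)
    (S : Fin m → Set V) (hS : ∀ i, Submodule.span K (S i) = ⊤) :
    ∃ v : Fin m → V, (∀ i, v i ∈ S i) ∧ LinearIndependent K v := by
  induction m with
  | zero => exact ⟨Fin.elim0, fun i => i.elim0, linearIndependent_empty_type⟩
  | succ m ih =>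
    obtain ⟨v, hvS, hv⟩ := ih (by omega) (S ∘ Fin.castSucc) (fun i => hS _)
    have hspan : Submodule.span K (Set.range v) ≠ ⊤ := fun h => by
      have := finrank_range_le_card (R := K) v
      rw [Set.finrank, h, finrank_top, Fintype.card_fin] at this
      omega
    obtain ⟨w, hwS, hw⟩ : ∃ w ∈ S (Fin.last m), w ∉ Submodule.span K (Set.range v) := by
      by_contra! h
      exact hspan (eq_top_iff.mpr ((hS _).ge.trans (Submodule.span_le.mpr h)))
    refine ⟨Fin.snoc v w, fun i => ?_, linearIndependent_finSnoc.mpr ⟨hv, hw⟩⟩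
    induction i using Fin.lastCases with
    | last => simpa using hwS
    | cast i => simpa using hvS i

section PowColumns

variable {R : Type*} [CommRing R] {n : ℕ}

def powColumnMatrix (α : Fin n → Matrix (Fin n) (Fin n) R) :
    Matrix (Fin n) (Fin n) (MvPolynomial (Fin n) R) :=
  Matrix.of fun r j => ∑ k : Fin n, MvPolynomial.C (α j r k) * MvPolynomial.X j ^ (k : ℕ)

theorem mapMatrix_powColumnMatrix {S : Type*} [CommRing S] (f : MvPolynomial (Fin n) R →+* S)
    (α : Fin n → Matrix (Fin n) (Fin n) R) :
    f.mapMatrix (powColumnMatrix α) =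
      Matrix.of fun r j =>
        ∑ k : Fin n, f (MvPolynomial.C (α j r k)) * f (MvPolynomial.X j) ^ (k : ℕ) := by
  ext r j
  simp [powColumnMatrix]

theorem det_powColumnMatrix_ne_zero {K : Type*} [Field K] [Infinite K]
    {α : Fin n → Matrix (Fin n) (Fin n) K} (hα : ∀ j, IsUnit (α j).det) :
    (powColumnMatrix α).det ≠ 0 := by
  obtain ⟨v, hvS, hv⟩ := exists_linearIndependent_mem_of_span_eq_top (by simp)
    (fun j => Set.range fun s : K => α j *ᵥ fun k : Fin n => s ^ (k : ℕ))
    (fun j => span_range_mulVec_pow_eq_top (hα j))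
  choose t ht using hvS
  have heval : (MvPolynomial.eval t).mapMatrix (powColumnMatrix α) = (Matrix.of v)ᵀ := by
    rw [mapMatrix_powColumnMatrix]
    ext r j
    simp [← ht, Matrix.mulVec, dotProduct]
  have hdet : ((MvPolynomial.eval t).mapMatrix (powColumnMatrix α)).det ≠ 0 := by
    rw [heval, Matrix.det_transpose]
    exact ((Matrix.isUnit_iff_isUnit_det _).mp
      (Matrix.linearIndependent_rows_iff_isUnit.mp hv)).ne_zero
  exact fun h => hdet (by rw [← RingHom.map_det, h, map_zero])

end PowColumns

namespace IterLaurent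

/-- The substitution `X_i ↦ ε_{i+1}`, built along the recursion defining `IterLaurent`:
the last variable becomes the Laurent variable over `IterLaurent n`. -/
def ofMvPolynomial : ∀ n : ℕ, MvPolynomial (Fin n) ℝ →+* IterLaurent n
  | 0 => (MvPolynomial.isEmptyRingEquiv ℝ (Fin 0)).toRingHom
  | (n + 1) =>
    (((HahnSeries.ofPowerSeries ℤ (IterLaurent n)).comp Polynomial.coeToPowerSeries.ringHom).comp
      ((Polynomial.mapRingHom (ofMvPolynomial n)).comp
        ((MvPolynomial.optionEquivLeft ℝ (Fin n)).toRingHom.comp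
          (MvPolynomial.rename finSuccEquivLast).toRingHom)) :
      MvPolynomial (Fin (n + 1)) ℝ →+* LaurentSeries (IterLaurent n))

theorem ofMvPolynomial_succ_apply (n : ℕ) (p : MvPolynomial (Fin (n + 1)) ℝ) :
    ofMvPolynomial (n + 1) p = HahnSeries.ofPowerSeries ℤ (IterLaurent n)
      ((MvPolynomial.optionEquivLeft ℝ (Fin n) (MvPolynomial.rename finSuccEquivLast p)).map
        (ofMvPolynomial n)) :=
  rfl

theorem ofMvPolynomial_injective : ∀ n, Function.Injective (ofMvPolynomial n)
  | 0 => (MvPolynomial.isEmptyRingEquiv ℝ (Fin 0)).injective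
  | (n + 1) => fun p q h => by
    rw [ofMvPolynomial_succ_apply, ofMvPolynomial_succ_apply] at h
    exact MvPolynomial.rename_injective _ finSuccEquivLast.injective <|
      (MvPolynomial.optionEquivLeft ℝ (Fin n)).injective <|
        Polynomial.map_injective _ (ofMvPolynomial_injective n) <|
          Polynomial.coe_injective _ <| HahnSeries.ofPowerSeries_injective h

theorem ofMvPolynomial_C : ∀ n (r : ℝ), ofMvPolynomial n (MvPolynomial.C r) = realEmb n r
  | 0, r => MvPolynomial.coeff_zero_C r
  | (n + 1), r => by
    rw [ofMvPolynomial_succ_apply, MvPolynomial.rename_C, MvPolynomial.optionEquivLeft_C,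
      Polynomial.map_C, Polynomial.coe_C, HahnSeries.ofPowerSeries_C, ofMvPolynomial_C n r]
    rfl

theorem ofMvPolynomial_X : ∀ n (i : Fin n), ofMvPolynomial n (MvPolynomial.X i) = epsV n i
  | (n + 1), i => by
    rw [ofMvPolynomial_succ_apply, MvPolynomial.rename_X]
    induction i using Fin.lastCases with
    | last =>
      rw [finSuccEquivLast_last, MvPolynomial.optionEquivLeft_X_none, Polynomial.map_X,
        Polynomial.coe_X, HahnSeries.ofPowerSeries_X]
      simp only [epsV, Fin.val_last, lt_self_iff_false, ↓reduceDIte]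
      rfl
    | cast j =>
      rw [finSuccEquivLast_castSucc, MvPolynomial.optionEquivLeft_X_some, Polynomial.map_C,
        Polynomial.coe_C, HahnSeries.ofPowerSeries_C, ofMvPolynomial_X n j]
      simp only [epsV, Fin.val_castSucc, Fin.is_lt, ↓reduceDIte]
      rfl

end IterLaurent

/-- For strictly increasing reals `t_1 < ... < t_n`, the Vandermonde vectors
`b(t_i) = (1, t_i, ..., t_i^{n-1})` form a basis of `ℝ^n`; consequently, for
`α_1, ..., α_n ∈ GL_n(ℝ)`, the determinant `det(α_1 b(ε_1), ..., α_n b(ε_n))` is a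
nonzero element of `ℝ((ε_1))...((ε_n))`. -/
theorem stmt12 (n : ℕ) :
    (∀ t : Fin n → ℝ, StrictMono t →
      LinearIndependent ℝ (fun (i : Fin n) (j : Fin n) => t i ^ (j : ℕ)) ∧
      Submodule.span ℝ (Set.range fun (i : Fin n) (j : Fin n) => t i ^ (j : ℕ)) = ⊤) ∧
    (∀ α : Fin n → Matrix (Fin n) (Fin n) ℝ, (∀ i, IsUnit (α i).det) →
      (Matrix.of fun (r : Fin n) (j : Fin n) =>
        ∑ k : Fin n, realEmb n (α j r k) * (epsV n j) ^ (k : ℕ)).det ≠ 0) := by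
  refine ⟨fun t ht => ⟨linearIndependent_pow_of_injective ht.injective,
    span_pow_eq_top_of_injective ht.injective⟩, fun α hα => ?_⟩
  have hmap : (IterLaurent.ofMvPolynomial n).mapMatrix (powColumnMatrix α) =
      Matrix.of fun r j => ∑ k : Fin n, realEmb n (α j r k) * epsV n j ^ (k : ℕ) := by
    simp only [mapMatrix_powColumnMatrix, IterLaurent.ofMvPolynomial_C,
      IterLaurent.ofMvPolynomial_X]
  rw [← hmap, ← RingHom.map_det]
  exact (map_ne_zero_iff _ (IterLaurent.ofMvPolynomial_injective n)).mpr
    (det_powColumnMatrix_ne_zero hα)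
end
end

section
/- Define σ(α_1,...,α_n)(w) = c(α_1 b(ε_1),...,α_n b(ε_n))(w) for α_i ∈ GL_n(R) and w ∈ R^n \ {0}, where c is the signed open-cone characteristic function over F = R((ε_1))...((ε_n)). Then for β, α_1, ..., α_n ∈ GL_n(R): σ(βα_1, ..., βα_n)(w) = sign(det β) · σ(α_1, ..., α_n)(β^{-1} w). -/
open Matrix
open scoped BigOperators

noncomputable section

open Classical in
/-- The sign of an element of `ℝ((ε_1))...((ε_n))` with respect to the
leading-coefficient positivity. -/
def sgnIter (n : ℕ) (x : IterLaurent n) : ℤ :=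
  if IterPos n x then 1 else if IterPos n (-x) then -1 else 0

open Classical in
/-- The signed open-cone characteristic function over `ℝ((ε_1))...((ε_m))`:
`c(v_1,...,v_n)(w) = sgn det(v_1,...,v_n)` if all the dual-basis coordinates of `w`
with respect to the basis `v_1, ..., v_n` are positive, and `0` otherwise. -/
def cIter (m n : ℕ) (v : Fin n → (Fin n → IterLaurent m)) (w : Fin n → IterLaurent m) : ℤ :=
  let M : Matrix (Fin n) (Fin n) (IterLaurent m) := Matrix.of fun r j => v j r
  if ∀ i, IterPos m ((M⁻¹ *ᵥ w) i) then sgnIter m M.det else 0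

/-- The Shintani cocycle `σ(α_1,...,α_n)(w) = c(α_1 b(ε_1), ..., α_n b(ε_n))(w)`,
where `b(ε) = (1, ε, ..., ε^{n-1})ᵀ` and `w ∈ ℝ^n` is embedded into
`F^n = (ℝ((ε_1))...((ε_n)))^n` as a constant vector. -/
def sigmaC (n : ℕ) (α : Fin n → Matrix (Fin n) (Fin n) ℝ) (w : Fin n → ℝ) : ℤ :=
  cIter n n
    (fun (i : Fin n) (r : Fin n) => ∑ j : Fin n, realEmb n (α i r j) * (epsV n i) ^ (j : ℕ))
    (fun r : Fin n => realEmb n (w r))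

/-- The sign of a real number, as an integer. -/
def sgnR (x : ℝ) : ℤ := if 0 < x then 1 else if x < 0 then -1 else 0

/-!
Left multiplication by `β` sends each column `α_i b(ε_i)` of the cone basis to `β α_i b(ε_i)`, so
the basis matrix is multiplied on the left by the constant matrix `β`. Hence the dual coordinates
of `w` in the new basis are those of `β⁻¹ w` in the old one, and the determinant acquires the real
factor `det β`. A nonzero real constant has order `0` in every Laurent series layer, so it rescales
the leading coefficient at each level, and the sign of `det β · x` is `sign (det β) · sign x`.
-/

def realEmbHom : ∀ n : ℕ, ℝ →+* IterLaurent n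
  | 0 => RingHom.id ℝ
  | (n + 1) => (HahnSeries.C : IterLaurent n →+* LaurentSeries (IterLaurent n)).comp (realEmbHom n)

theorem realEmb_eq_realEmbHom (n : ℕ) (r : ℝ) : realEmb n r = realEmbHom n r := by
  induction n with
  | zero => rfl
  | succ n ih => exact congrArg HahnSeries.C ih

theorem not_iterPos_zero (n : ℕ) : ¬ IterPos n 0 := by
  cases n with
  | zero => exact lt_irrefl 0
  | succ n => exact fun h => h.1 rfl

theorem iterPos_succ_iff {n : ℕ} (x : IterLaurent (n + 1)) :
    IterPos (n + 1) x ↔ IterPos n (toLS x).leadingCoeff := by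
  rw [HahnSeries.leadingCoeff_eq]
  refine ⟨And.right, fun h => ⟨fun hx => ?_, h⟩⟩
  rw [hx, HahnSeries.coeff_zero] at h
  exact not_iterPos_zero n h

theorem IterPos.not_neg {n : ℕ} {x : IterLaurent n} (h : IterPos n x) : ¬ IterPos n (-x) := by
  induction n with
  | zero => exact fun h' => lt_asymm h (neg_pos.mp h')
  | succ n ih =>
    rw [iterPos_succ_iff] at h ⊢
    exact fun h' => ih h (by rwa [← HahnSeries.leadingCoeff_neg])

theorem iterPos_realEmb_mul_iff {n : ℕ} {r : ℝ} (hr : 0 < r) (x : IterLaurent n) :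
    IterPos n (realEmb n r * x) ↔ IterPos n x := by
  induction n with
  | zero => exact mul_pos_iff_of_pos_left hr
  | succ n ih =>
    have hlead : (toLS (realEmb (n + 1) r * x)).leadingCoeff
        = realEmb n r * (toLS x).leadingCoeff := by
      change (HahnSeries.C (realEmb n r) * toLS x).leadingCoeff = _
      rw [HahnSeries.leadingCoeff_mul, HahnSeries.C_apply, HahnSeries.leadingCoeff_of_single]
    rw [iterPos_succ_iff, iterPos_succ_iff, hlead, ih]

theorem sgnIter_neg (n : ℕ) (x : IterLaurent n) : sgnIter n (-x) = -sgnIter n x := by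
  by_cases hx : IterPos n x
  · simp [sgnIter, hx, hx.not_neg]
  · by_cases hnx : IterPos n (-x) <;> simp [sgnIter, hx, hnx]

theorem sgnIter_realEmb_mul_of_pos {n : ℕ} {r : ℝ} (hr : 0 < r) (x : IterLaurent n) :
    sgnIter n (realEmb n r * x) = sgnIter n x := by
  have hneg := iterPos_realEmb_mul_iff hr (-x)
  rw [mul_neg] at hneg
  rw [sgnIter, sgnIter, iterPos_realEmb_mul_iff hr, hneg]

theorem sgnIter_realEmb_mul (n : ℕ) (r : ℝ) (x : IterLaurent n) :
    sgnIter n (realEmb n r * x) = sgnR r * sgnIter n x := by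
  rcases lt_trichotomy r 0 with hr | rfl | hr
  · have hneg : realEmb n r * x = -(realEmb n (-r) * x) := by
      rw [realEmb_eq_realEmbHom, realEmb_eq_realEmbHom, map_neg, neg_mul, neg_neg]
    rw [hneg, sgnIter_neg, sgnIter_realEmb_mul_of_pos (neg_pos.mpr hr)]
    simp [sgnR, hr, hr.not_gt]
  · simp [sgnR, sgnIter, realEmb_eq_realEmbHom, not_iterPos_zero]
  · rw [sgnIter_realEmb_mul_of_pos hr]
    simp [sgnR, hr]

open Classical in
theorem cIter_eq_ite (m n : ℕ) (v : Fin n → Fin n → IterLaurent m) (w : Fin n → IterLaurent m) :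
    cIter m n v w = if ∀ i, IterPos m (((of fun r j => v j r)⁻¹ *ᵥ w) i)
      then sgnIter m (of fun r j => v j r).det else 0 :=
  rfl

theorem cIter_mulVec (m n : ℕ) {β : Matrix (Fin n) (Fin n) ℝ} (hβ : IsUnit β.det)
    (v : Fin n → Fin n → IterLaurent m) (w : Fin n → IterLaurent m) :
    cIter m n (fun i => β.map (realEmbHom m) *ᵥ v i) (β.map (realEmbHom m) *ᵥ w)
      = sgnR β.det * cIter m n v w := by
  set B := β.map (realEmbHom m)
  have hBM : (of fun r j => (B *ᵥ v j) r) = B * of fun r j => v j r := by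
    ext r j
    simp [mulVec, dotProduct, mul_apply]
  have hBdet : B.det = realEmb m β.det := by
    rw [realEmb_eq_realEmbHom, RingHom.map_det]
    rfl
  have hB : IsUnit B.det := by
    rw [hBdet, realEmb_eq_realEmbHom]
    exact hβ.map _
  have hcoord (M : Matrix (Fin n) (Fin n) (IterLaurent m)) :
      (B * M)⁻¹ *ᵥ (B *ᵥ w) = M⁻¹ *ᵥ w := by
    rw [Matrix.mul_inv_rev, ← mulVec_mulVec, mulVec_mulVec w B⁻¹ B, nonsing_inv_mul B hB,
      one_mulVec]
  have hdet (M : Matrix (Fin n) (Fin n) (IterLaurent m)) :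
      (B * M).det = realEmb m β.det * M.det := by
    rw [det_mul, hBdet]
  rw [cIter_eq_ite, cIter_eq_ite, hBM, hcoord, hdet, sgnIter_realEmb_mul, mul_ite, mul_zero]

/-- The vector `a · b(e) = a (1, e, ..., e^{n-1})ᵀ` in `ℝ((ε_1))...((ε_m))^n`. -/
def mulVecPowers {m n : ℕ} (a : Matrix (Fin n) (Fin n) ℝ) (e : IterLaurent m) :
    Fin n → IterLaurent m :=
  fun r => ∑ j : Fin n, realEmb m (a r j) * e ^ (j : ℕ)

theorem mulVecPowers_mul {m n : ℕ} (β a : Matrix (Fin n) (Fin n) ℝ) (e : IterLaurent m) :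
    mulVecPowers (β * a) e = β.map (realEmbHom m) *ᵥ mulVecPowers a e := by
  ext r
  simp only [mulVecPowers, mulVec, dotProduct, map_apply, mul_apply, realEmb_eq_realEmbHom,
    map_sum, map_mul, Finset.sum_mul, Finset.mul_sum, mul_assoc]
  exact Finset.sum_comm

theorem map_mulVec_realEmb (m : ℕ) {n : ℕ} (β : Matrix (Fin n) (Fin n) ℝ) (w : Fin n → ℝ) :
    β.map (realEmbHom m) *ᵥ (fun r => realEmb m (w r)) = fun r => realEmb m ((β *ᵥ w) r) := by
  ext r
  simp only [realEmb_eq_realEmbHom, RingHom.map_mulVec]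
  rfl

theorem sigmaC_eq_cIter (n : ℕ) (α : Fin n → Matrix (Fin n) (Fin n) ℝ) (w : Fin n → ℝ) :
    sigmaC n α w
      = cIter n n (fun i => mulVecPowers (α i) (epsV n i)) (fun r => realEmb n (w r)) :=
  rfl

theorem stmt13_general (n : ℕ) (β : Matrix (Fin n) (Fin n) ℝ) (hβ : IsUnit β.det)
    (α : Fin n → Matrix (Fin n) (Fin n) ℝ)
    (w : Fin n → ℝ) :
    sigmaC n (fun i => β * α i) w = sgnR β.det * sigmaC n α (β⁻¹ *ᵥ w) := by
  have hw : (fun r => realEmb n (w r))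
      = β.map (realEmbHom n) *ᵥ fun r => realEmb n ((β⁻¹ *ᵥ w) r) := by
    rw [map_mulVec_realEmb, mulVec_mulVec, mul_nonsing_inv β hβ, one_mulVec]
  rw [sigmaC_eq_cIter, sigmaC_eq_cIter, hw]
  simp only [mulVecPowers_mul]
  exact cIter_mulVec n n hβ _ _

/-- Equivariance of the Shintani cocycle: for `β, α_1, ..., α_n ∈ GL_n(ℝ)` and
`0 ≠ w ∈ ℝ^n`, `σ(βα_1, ..., βα_n)(w) = sign(det β) · σ(α_1, ..., α_n)(β⁻¹ w)`. -/
theorem stmt13 (n : ℕ) (β : Matrix (Fin n) (Fin n) ℝ) (hβ : IsUnit β.det)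
    (α : Fin n → Matrix (Fin n) (Fin n) ℝ) (hα : ∀ i, IsUnit (α i).det)
    (w : Fin n → ℝ) (hw : w ≠ 0) :
    sigmaC n (fun i => β * α i) w = sgnR β.det * sigmaC n α (β⁻¹ *ᵥ w) :=
  stmt13_general n β hβ α w
end
end

section
/- Let F = R((ε_1))...((ε_n)) and let φ: R^n → F be an R-linear map (the restriction of an F-linear form on F^n). Then the set S = {w ∈ R^n : φ(w) > 0 in F} is a finite disjoint union of sets of the form {w : φ_r(w) > 0 and φ_s(w) = 0 for all s < r}, each of which is an intersection of an open half-space with a linear subspace of R^n; in particular only finitely many such pieces are nonempty. -/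
open Matrix
open scoped BigOperators

noncomputable section

/-- The coefficient of the monomial `ε^r = ε_1^{r_1} ⋯ ε_n^{r_n}` in an element of
`ℝ((ε_1))...((ε_n))`. -/
def coeffIter : ∀ n : ℕ, IterLaurent n → (Fin n → ℤ) → ℝ
  | 0, x, _ => toR x
  | (n + 1), x, r => coeffIter n ((toLS x).coeff (r (Fin.last n))) (r ∘ Fin.castSucc)

/-- The lexicographic order on multi-indices: `s < r` iff there is an `i` with
`s_i < r_i` and `s_j = r_j` for all `j > i`. -/
def lexLt {n : ℕ} (s r : Fin n → ℤ) : Prop :=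
  ∃ i : Fin n, s i < r i ∧ ∀ j : Fin n, i < j → s j = r j

/-- For an `F`-linear form `ψ` on `F^n` (`F = ℝ((ε_1))...((ε_n))`) restricted to `ℝ^n`
as `φ(w) = ψ(w)`, with `φ = ∑_r φ_r ε^r`, the piece
`S_r = {w : φ_r(w) > 0 and φ_s(w) = 0 for all s < r}`. -/
def Sr (n : ℕ) (ψ : (Fin n → IterLaurent n) →ₗ[IterLaurent n] IterLaurent n)
    (r : Fin n → ℤ) : Set (Fin n → ℝ) :=
  {w | 0 < coeffIter n (ψ fun j => realEmb n (w j)) r ∧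
    ∀ s, lexLt s r → coeffIter n (ψ fun j => realEmb n (w j)) s = 0}

/-!
Write `x = ∑ x_r ε^r`. Peeling off the outermost variable `ε_n`, whose leading exponent is the last
entry of `r`, an induction on `n` shows that `x > 0` iff some `x_r` is positive while `x_s = 0` for
all `s < r`; so the positive cone is the union of the pieces `S_r`. Since `lexLt` is the
colexicographic order on `ℤ^n`, a linear order, the pieces are pairwise disjoint, and `S_r` is cut
out by the real linear forms `φ_s`, `s ≤ r`. Picking `w_r ∈ S_r` for each nonempty piece, the
matrix `(φ_s(w_r))` is triangular with nonzero diagonal, so the `w_r` are linearly independent in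
`ℝ^n` and there are finitely many of them.
-/

theorem lexLt_snoc_iff {n : ℕ} {s r : Fin n → ℤ} {a b : ℤ} :
    lexLt (Fin.snoc s a : Fin (n + 1) → ℤ) (Fin.snoc r b) ↔ a < b ∨ a = b ∧ lexLt s r := by
  simp only [lexLt, Fin.exists_fin_succ', Fin.forall_fin_succ', Fin.snoc_castSucc, Fin.snoc_last,
    Fin.castSucc_lt_castSucc_iff, Fin.castSucc_lt_last, lt_irrefl, (Fin.le_last _).not_gt,
    true_implies, false_implies, implies_true, and_true]
  constructor
  · rintro (⟨i, hi, hj, rfl⟩ | hab)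
    exacts [Or.inr ⟨rfl, i, hi, hj⟩, Or.inl hab]
  · rintro (hab | ⟨rfl, i, hi, hj⟩)
    exacts [Or.inr hab, Or.inl ⟨i, hi, hj, rfl⟩]

theorem lexLt_iff_toColex_lt {n : ℕ} {s r : Fin n → ℤ} : lexLt s r ↔ toColex s < toColex r := by
  show _ ↔ ∃ i, (∀ j, j > i → s j = r j) ∧ s i < r i
  simp only [lexLt, and_comm, gt_iff_lt]

theorem coeffIter_snoc (n : ℕ) (x : IterLaurent (n + 1)) (r : Fin n → ℤ) (k : ℤ) :
    coeffIter (n + 1) x (Fin.snoc r k) = coeffIter n ((toLS x).coeff k) r := by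
  simp only [coeffIter, Fin.snoc_last, Fin.snoc_comp_castSucc]

theorem coeffIter_zero (n : ℕ) (r : Fin n → ℤ) : coeffIter n 0 r = 0 := by
  induction n with
  | zero => rfl
  | succ n ih => exact ih _

theorem coeffIter_add (n : ℕ) (x y : IterLaurent n) (r : Fin n → ℤ) :
    coeffIter n (x + y) r = coeffIter n x r + coeffIter n y r := by
  induction n with
  | zero => rfl
  | succ n ih => exact ih _ _ _

theorem coeffIter_realEmb_mul (n : ℕ) (c : ℝ) (x : IterLaurent n) (r : Fin n → ℤ) :
    coeffIter n (realEmb n c * x) r = c * coeffIter n x r := by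
  induction n with
  | zero => rfl
  | succ n ih =>
    show coeffIter n ((HahnSeries.C (realEmb n c) * toLS x).coeff _) _ = _
    rw [HahnSeries.C_mul_eq_smul, HahnSeries.coeff_smul, smul_eq_mul]
    exact ih _ _

theorem eq_zero_of_forall_coeffIter_eq_zero {n : ℕ} {x : IterLaurent n}
    (h : ∀ r, coeffIter n x r = 0) : x = 0 := by
  induction n with
  | zero => exact h fun _ => 0
  | succ n ih =>
    show toLS x = 0
    ext k
    exact ih fun r => by rw [← coeffIter_snoc, h]

theorem iterPos_iff (n : ℕ) (x : IterLaurent n) :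
    IterPos n x ↔ ∃ r, 0 < coeffIter n x r ∧ ∀ s, lexLt s r → coeffIter n x s = 0 := by
  induction n with
  | zero => exact ⟨fun h => ⟨fun _ => 0, h, fun s ⟨i, _⟩ => i.elim0⟩, fun ⟨_, h, _⟩ => h⟩
  | succ n ih =>
    set y : LaurentSeries (IterLaurent n) := toLS x
    constructor
    · rintro ⟨-, hpos⟩
      obtain ⟨r, hr, hbelow⟩ := (ih _).1 hpos
      refine ⟨Fin.snoc r y.order, by rwa [coeffIter_snoc], fun s hs => ?_⟩
      cases s using Fin.snocCases with
      | _ s k =>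
        rw [coeffIter_snoc]
        rcases lexLt_snoc_iff.1 hs with hk | ⟨rfl, hsr⟩
        · rw [HahnSeries.coeff_eq_zero_of_lt_order hk, coeffIter_zero]
        · exact hbelow s hsr
    · rintro ⟨r, hr, hbelow⟩
      cases r using Fin.snocCases with
      | _ r k =>
        rw [coeffIter_snoc] at hr
        have hk : y.coeff k ≠ 0 := fun h => hr.ne' (by rw [h, coeffIter_zero])
        have hy : y ≠ 0 := fun h => hk (by rw [h, HahnSeries.coeff_zero])
        -- Below `k` every coefficient of `y` vanishes, since all its `coeffIter`s do.
        have hord : y.order = k := by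
          refine le_antisymm (HahnSeries.order_le_of_coeff_ne_zero hk) (not_lt.1 fun hlt => ?_)
          refine HahnSeries.coeff_order_eq_zero.not.2 hy (eq_zero_of_forall_coeffIter_eq_zero ?_)
          exact fun s => coeffIter_snoc n x s _ ▸ hbelow _ (lexLt_snoc_iff.2 (.inl hlt))
        refine ⟨hy, (ih _).2 ⟨r, hord ▸ hr, fun s hs => hord ▸ ?_⟩⟩
        exact coeffIter_snoc n x s k ▸ hbelow _ (lexLt_snoc_iff.2 (.inr ⟨rfl, hs⟩))

theorem realEmb_add (n : ℕ) (a b : ℝ) : realEmb n (a + b) = realEmb n a + realEmb n b := by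
  induction n with
  | zero => rfl
  | succ n ih => exact (congrArg HahnSeries.C ih).trans (map_add HahnSeries.C _ _)

theorem realEmb_mul (n : ℕ) (a b : ℝ) : realEmb n (a * b) = realEmb n a * realEmb n b := by
  induction n with
  | zero => rfl
  | succ n ih => exact (congrArg HahnSeries.C ih).trans (map_mul HahnSeries.C _ _)

/-- The form `φ_r` in `φ = ∑_r φ_r ε^r`. -/
def coeffForm (n : ℕ) (ψ : (Fin n → IterLaurent n) →ₗ[IterLaurent n] IterLaurent n)
    (r : Fin n → ℤ) : (Fin n → ℝ) →ₗ[ℝ] ℝ where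
  toFun w := coeffIter n (ψ fun j => realEmb n (w j)) r
  map_add' w w' := by
    simp only [Pi.add_apply, realEmb_add]
    exact (congrArg (coeffIter n · r) (map_add ψ _ _)).trans (coeffIter_add ..)
  map_smul' c w := by
    simp only [Pi.smul_apply, smul_eq_mul, realEmb_mul, RingHom.id_apply]
    exact (congrArg (coeffIter n · r) (map_smul ψ (realEmb n c) _)).trans
      (coeffIter_realEmb_mul ..)

theorem Sr_eq_inter_iInf_ker (n : ℕ)
    (ψ : (Fin n → IterLaurent n) →ₗ[IterLaurent n] IterLaurent n) (r : Fin n → ℤ) :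
    Sr n ψ r = {w | 0 < coeffForm n ψ r w} ∩
      ((⨅ (s) (_ : lexLt s r), LinearMap.ker (coeffForm n ψ s) : Submodule ℝ _) : Set _) := by
  ext w
  simp [Sr, coeffForm]

section Triangular

variable {ι K M : Type*} [LinearOrder ι]

theorem linearIndependent_of_triangular [Ring K] [NoZeroDivisors K] [AddCommGroup M]
    [Module K M] (f : ι → M →ₗ[K] K) (v : ι → M) (hdiag : ∀ i, f i (v i) ≠ 0)
    (hlower : ∀ i j, i < j → f i (v j) = 0) : LinearIndependent K v := by
  classical
  rw [linearIndependent_iff']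
  intro s g hsum i hi
  by_contra hgi
  set t := s.filter (g · ≠ 0)
  have ht : t.Nonempty := ⟨i, Finset.mem_filter.2 ⟨hi, hgi⟩⟩
  obtain ⟨hms, hgm⟩ := Finset.mem_filter.1 (t.min'_mem ht)
  set m := t.min' ht
  have hsum_m : ∑ j ∈ s, g j * f m (v j) = g m * f m (v m) := by
    refine Finset.sum_eq_single_of_mem m hms fun j hj hjm => ?_
    by_cases hgj : g j = 0
    · rw [hgj, zero_mul]
    · rw [hlower m j ((t.min'_le j (Finset.mem_filter.2 ⟨hj, hgj⟩)).lt_of_ne' hjm), mul_zero]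
  have hzero : ∑ j ∈ s, g j * f m (v j) = 0 := by
    simpa only [map_sum, map_smul, smul_eq_mul, map_zero] using congrArg (f m) hsum
  exact mul_ne_zero hgm (hdiag m) (hsum_m ▸ hzero)

theorem finite_setOf_exists_apply_ne_zero_forall_lt [DivisionRing K] [AddCommGroup M]
    [Module K M] [Module.Finite K M] (f : ι → M →ₗ[K] K) :
    {i | ∃ v, f i v ≠ 0 ∧ ∀ j < i, f j v = 0}.Finite := by
  set S := {i | ∃ v, f i v ≠ 0 ∧ ∀ j < i, f j v = 0}
  choose v hdiag hlower using fun i : S => i.2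
  exact Set.finite_coe_iff.1
    (linearIndependent_of_triangular (fun i : S => f i) v hdiag fun i j hij => hlower j i hij).finite

end Triangular

/-- Let `φ : ℝ^n → F` be the restriction of an `F`-linear form `ψ` on `F^n`.  Then the
set `S = {w ∈ ℝ^n : φ(w) > 0}` is the disjoint union of the pieces
`S_r = {w : φ_r(w) > 0, φ_s(w) = 0 ∀ s < r}`; each nonempty piece is the intersection
of an open half-space with a linear subspace of `ℝ^n`, and only finitely many pieces
are nonempty. -/
theorem stmt15 (n : ℕ) (ψ : (Fin n → IterLaurent n) →ₗ[IterLaurent n] IterLaurent n) :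
    ({w : Fin n → ℝ | IterPos n (ψ fun j => realEmb n (w j))} = ⋃ r : Fin n → ℤ, Sr n ψ r) ∧
    (∀ r s : Fin n → ℤ, r ≠ s → Disjoint (Sr n ψ r) (Sr n ψ s)) ∧
    (∀ r : Fin n → ℤ, (Sr n ψ r).Nonempty →
      ∃ (f : (Fin n → ℝ) →ₗ[ℝ] ℝ) (V : Submodule ℝ (Fin n → ℝ)),
        Sr n ψ r = {w | 0 < f w} ∩ (V : Set (Fin n → ℝ))) ∧
    {r : Fin n → ℤ | (Sr n ψ r).Nonempty}.Finite := by
  refine ⟨?_, ?_, fun r _ => ⟨_, _, Sr_eq_inter_iInf_ker n ψ r⟩, ?_⟩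
  · exact Set.ext fun w => by simp [iterPos_iff, Sr]
  · intro r s hrs
    refine Set.disjoint_left.2 fun w hr hs => ?_
    rcases lt_or_gt_of_ne (toColex.injective.ne hrs) with h | h
    · exact hr.1.ne' (hs.2 r (lexLt_iff_toColex_lt.2 h))
    · exact hs.1.ne' (hr.2 s (lexLt_iff_toColex_lt.2 h))
  · refine ((finite_setOf_exists_apply_ne_zero_forall_lt fun c : Colex (Fin n → ℤ) =>
      coeffForm n ψ (ofColex c)).preimage toColex.injective.injOn).subset ?_
    rintro r ⟨w, hpos, hbelow⟩
    exact ⟨w, hpos.ne', fun s hs => hbelow s (lexLt_iff_toColex_lt.2 hs)⟩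
end
end

section
/- Let S_r and S_s be two of the pieces S_t = {w ∈ R^n : φ_t(w) > 0, φ_u(w) = 0 for all u < t} arising from an F-linear form φ with real-linear coefficients φ_t, with s < r. If both S_r and S_s are nonempty, then S_r is contained in the boundary of the closure of S_s, and hence dim(span of S_r) < dim(span of S_s). Consequently only finitely many S_t are nonempty. -/
lemma lexLt_trans {n : ℕ} {u s r : Fin n → ℤ} (h1 : lexLt u s) (h2 : lexLt s r) :
    lexLt u r := by
  obtain ⟨i, hi, hia⟩ := h1
  obtain ⟨k, hk, hka⟩ := h2
  rcases lt_trichotomy i k with h | h | h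
  · exact ⟨k, by rw [hia k h]; exact hk, fun j hj => (hia j (h.trans hj)).trans (hka j hj)⟩
  · subst h
    exact ⟨i, hi.trans hk, fun j hj => (hia j hj).trans (hka j hj)⟩
  · refine ⟨i, ?_, fun j hj => (hia j hj).trans (hka j (h.trans hj))⟩
    rw [hka i h] at hi
    exact hi

lemma lexLt_total {n : ℕ} {s r : Fin n → ℤ} (h : s ≠ r) : lexLt s r ∨ lexLt r s := by
  classical
  set F := Finset.univ.filter (fun i => s i ≠ r i) with hF
  have hne : F.Nonempty := by
    by_contra hc
    apply h
    funext i
    by_contra hi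
    exact hc ⟨i, by simp [hF, hi]⟩
  set i := F.max' hne with hidef
  have hiF : i ∈ F := F.max'_mem hne
  have hieq : s i ≠ r i := by simpa [hF] using hiF
  have hrest : ∀ j : Fin n, i < j → s j = r j := by
    intro j hj
    by_contra hjne
    have : j ∈ F := by simp [hF, hjne]
    exact absurd (F.le_max' j this) (not_le.mpr hj)
  rcases hieq.lt_or_gt with h' | h'
  · exact Or.inl ⟨i, h', hrest⟩
  · exact Or.inr ⟨i, h', fun j hj => (hrest j hj).symm⟩

/-- For a family of real linear forms `φ_t` (the coefficients of an `F`-linear form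
`φ = ∑_t φ_t ε^t`), consider the pieces
`S_t = {w ∈ ℝ^n : φ_t(w) > 0, φ_u(w) = 0 ∀ u < t}`.  If `s < r` and both `S_r` and
`S_s` are nonempty, then `S_r` is contained in the boundary of the closure of `S_s`,
and the dimension of the span of `S_r` is strictly smaller than that of the span of
`S_s`; consequently only finitely many of the pieces `S_t` are nonempty. -/
theorem stmt16 (n : ℕ) (φC : (Fin n → ℤ) → ((Fin n → ℝ) →ₗ[ℝ] ℝ)) :
    let St : (Fin n → ℤ) → Set (Fin n → ℝ) := fun t =>
      {w | 0 < φC t w ∧ ∀ u, lexLt u t → φC u w = 0}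
    (∀ r s : Fin n → ℤ, lexLt s r → (St r).Nonempty → (St s).Nonempty →
      St r ⊆ frontier (closure (St s)) ∧
      Module.finrank ℝ (Submodule.span ℝ (St r)) <
        Module.finrank ℝ (Submodule.span ℝ (St s))) ∧
    {t : Fin n → ℤ | (St t).Nonempty}.Finite := by
  intro St
  -- key perturbation lemma
  have key : ∀ r s : Fin n → ℤ, lexLt s r → ∀ w ∈ St r, ∀ x ∈ St s,
      ∀ ε : ℝ, 0 < ε → w + ε • x ∈ St s := by
    intro r s hsr w hw x hx ε hε
    constructor
    · have h0 : φC s w = 0 := hw.2 s hsr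
      have : φC s (w + ε • x) = ε * φC s x := by
        simp [map_add, map_smul, h0, smul_eq_mul]
      rw [this]
      exact mul_pos hε hx.1
    · intro u hu
      have h1 : φC u w = 0 := hw.2 u (lexLt_trans hu hsr)
      have h2 : φC u x = 0 := hx.2 u hu
      simp [map_add, map_smul, h1, h2]
  have hpart : ∀ r s : Fin n → ℤ, lexLt s r → (St r).Nonempty → (St s).Nonempty →
      St r ⊆ frontier (closure (St s)) ∧
      Module.finrank ℝ (Submodule.span ℝ (St r)) <
        Module.finrank ℝ (Submodule.span ℝ (St s)) := by
    intro r s hsr hrne hsne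
    obtain ⟨x, hx⟩ := hsne
    -- closure membership
    have hcl : ∀ w ∈ St r, w ∈ closure (St s) := by
      intro w hw
      have ht : Filter.Tendsto (fun ε : ℝ => w + ε • x)
          (nhdsWithin 0 (Set.Ioi 0)) (nhds w) := by
        have hc : Continuous (fun ε : ℝ => w + ε • x) :=
          continuous_const.add (continuous_id.smul continuous_const)
        have := hc.tendsto 0
        simp only [zero_smul, add_zero] at this
        exact this.mono_left nhdsWithin_le_nhds
      refine mem_closure_of_tendsto ht ?_
      filter_upwards [self_mem_nhdsWithin] with ε hε
      exact key r s hsr w hw x hx ε hε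
    -- not in interior
    have hint : ∀ w ∈ St r, w ∉ interior (closure (St s)) := by
      intro w hw hmem
      have hcont : Continuous (φC s) := (φC s).continuous_of_finiteDimensional
      have hsub : closure (St s) ⊆ {v | 0 ≤ φC s v} := by
        apply closure_minimal
        · intro v hv; exact hv.1.le
        · exact isClosed_le continuous_const hcont
      have hmem' : w ∈ interior {v | 0 ≤ φC s v} := interior_mono hsub hmem
      have ht : Filter.Tendsto (fun δ : ℝ => w - δ • x)
          (nhdsWithin 0 (Set.Ioi 0)) (nhds w) := by
        have hc : Continuous (fun δ : ℝ => w - δ • x) :=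
          continuous_const.sub (continuous_id.smul continuous_const)
        have := hc.tendsto 0
        simp only [zero_smul, sub_zero] at this
        exact this.mono_left nhdsWithin_le_nhds
      have hev : ∀ᶠ δ in nhdsWithin (0:ℝ) (Set.Ioi 0),
          w - δ • x ∈ interior {v | 0 ≤ φC s v} :=
        ht.eventually (isOpen_interior.mem_nhds hmem')
      obtain ⟨δ, h1, h2⟩ := (hev.and self_mem_nhdsWithin).exists
      have h3 : w - δ • x ∈ {v | 0 ≤ φC s v} := interior_subset h1
      replace h3 : 0 ≤ φC s (w - δ • x) := h3
      have h0 : φC s w = 0 := hw.2 s hsr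
      have : φC s (w - δ • x) = -(δ * φC s x) := by
        simp [map_sub, map_smul, h0, smul_eq_mul]
      rw [this] at h3
      have : 0 < δ * φC s x := mul_pos h2 hx.1
      linarith
    constructor
    · intro w hw
      rw [frontier, closure_closure]
      exact ⟨hcl w hw, hint w hw⟩
    · have h1 : Submodule.span ℝ (St r) ≤
          Submodule.span ℝ (St s) ⊓ LinearMap.ker (φC s) := by
        rw [Submodule.span_le]
        intro w hw
        refine Submodule.mem_inf.mpr ⟨?_, LinearMap.mem_ker.mpr (hw.2 s hsr)⟩
        have heq : w = (w + (1:ℝ) • x) - x := by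
          rw [one_smul, add_sub_cancel_right]
        rw [heq]
        exact Submodule.sub_mem _
          (Submodule.subset_span (key r s hsr w hw x hx 1 one_pos))
          (Submodule.subset_span hx)
      have h2 : Submodule.span ℝ (St s) ⊓ LinearMap.ker (φC s) <
          Submodule.span ℝ (St s) := by
        refine lt_of_le_of_ne inf_le_left (fun he => ?_)
        have hxs : x ∈ Submodule.span ℝ (St s) := Submodule.subset_span hx
        rw [← he] at hxs
        exact absurd (LinearMap.mem_ker.mp (Submodule.mem_inf.mp hxs).2) hx.1.ne'
      exact Submodule.finrank_lt_finrank_of_lt (h1.trans_lt h2)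
  refine ⟨hpart, ?_⟩
  apply Set.Finite.of_finite_image
    (f := fun t => Module.finrank ℝ (Submodule.span ℝ (St t)))
  · apply (Set.finite_Iic n).subset
    rintro m ⟨t, _, rfl⟩
    calc Module.finrank ℝ (Submodule.span ℝ (St t))
        ≤ Module.finrank ℝ (Fin n → ℝ) := Submodule.finrank_le _
      _ = n := by simp
  · intro a ha b hb hab
    by_contra hne
    rcases lexLt_total hne with h | h
    · exact absurd hab (ne_of_gt (hpart b a h hb ha).2)
    · exact absurd hab (ne_of_lt (hpart a b h ha hb).2)
end
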